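/- Let A be a von Neumann algebra (or unital C*-algebra), H a complex Hilbert space, and Φ, Ψ : A → L(H) completely positive maps with Ψ ≤ Φ (i.e. Φ − Ψ is completely positive). If (M, π, J) is a minimal Stinespring dilation of Φ, then there exists a unique operator E ∈ L(M) such that [E, π(a)] = 0 for all a ∈ A and Ψ(a) = J*π(a)EJ for all a ∈ A. -/

import Mathlib

open scoped ComplexOrder ComplexInnerProductSpace Topology

noncomputable section

/-- A linear map `Φ : A → L(H)` from a `*`-algebra into the bounded operators on a complex
Hilbert space `H` is *completely positive* if for all `n`, `a₁, …, aₙ ∈ A` and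
`φ₁, …, φₙ ∈ H` one has `∑ j k, ⟪φ j, Φ (star (a j) * a k) (φ k)⟫ ≥ 0`. -/
def IsCompletelyPositive {A : Type*} [NonUnitalNonAssocSemiring A] [StarRing A] [Module ℂ A]
    {H : Type*} [NormedAddCommGroup H] [InnerProductSpace ℂ H]
    (Φ : A →ₗ[ℂ] H →L[ℂ] H) : Prop :=
  ∀ (n : ℕ) (a : Fin n → A) (v : Fin n → H),
    0 ≤ ∑ j, ∑ k, ⟪v j, Φ (star (a j) * a k) (v k)⟫

/-- The convex set `CP_P(A;H)` of completely positive maps `Φ : A → L(H)` with `Φ 1 = P`. -/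
def CPWithUnit (A : Type*) [Ring A] [StarRing A] [Algebra ℂ A]
    (H : Type*) [NormedAddCommGroup H] [InnerProductSpace ℂ H]
    (P : H →L[ℂ] H) : Set (A →ₗ[ℂ] H →L[ℂ] H) :=
  {Φ | IsCompletelyPositive Φ ∧ Φ 1 = P}

/-- `x` is an extremal point of the convex set `S`: whenever `x` is a nontrivial convex
combination of two members of `S`, they coincide. -/
def IsExtremalIn {V : Type*} [AddCommMonoid V] [Module ℂ V] (S : Set V) (x : V) : Prop :=
  x ∈ S ∧ ∀ y ∈ S, ∀ z ∈ S, ∀ t : ℝ, 0 < t → t < 1 →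
    x = (t : ℂ) • y + ((1 - t : ℝ) : ℂ) • z → y = z

/-- `(M, π, J)` is a *minimal Stinespring dilation* of `Φ : A → L(H)`: `π` is a unital
`*`-representation of `A` on `M`, `J : H → M` is bounded linear, `Φ a = J⋆ ∘ π a ∘ J`, and
the span of `{π a (J v)}` is dense in `M`. -/
structure IsMinimalStinespring {A : Type*} [Ring A] [StarRing A] [Algebra ℂ A]
    {H M : Type*} [NormedAddCommGroup H] [InnerProductSpace ℂ H] [CompleteSpace H]
    [NormedAddCommGroup M] [InnerProductSpace ℂ M] [CompleteSpace M]
    (Φ : A →ₗ[ℂ] H →L[ℂ] H) (π : A →⋆ₐ[ℂ] (M →L[ℂ] M)) (J : H →L[ℂ] M) : Prop where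
  dilation : ∀ a : A, Φ a = (ContinuousLinearMap.adjoint J) ∘L π a ∘L J
  minimal : Dense (↑(Submodule.span ℂ {m : M | ∃ (a : A) (v : H), m = π a (J v)}) : Set M)

/-!
A completely positive map `Ψ` induces on finitely supported functions `A →₀ H` the positive
sesquilinear form `⟪s, t⟫_Ψ = ∑ a b, ⟪s a, Ψ (star a * b) (t b)⟫`. For `Φ` this form is the
pull-back of the inner product of `M` along `s ↦ ∑ a, π a (J (s a))`, whose range is dense by
minimality. Since `Φ - Ψ` is completely positive, Cauchy–Schwarz bounds the `Ψ`-form by the norms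
in `M`, so it is represented by a bounded operator `E` on `M`:
`⟪π a (J v), E (π b (J w))⟫ = ⟪v, Ψ (star a * b) w⟫`. By density this identity determines `E`,
forces it to commute with `π`, and is equivalent to the two properties asked for.
-/

namespace LinearMap

variable {V : Type*} [AddCommGroup V] [Module ℂ V] {B : V →ₗ⋆[ℂ] V →ₗ[ℂ] ℂ}

theorem IsNonneg.isSymm (hB : B.IsNonneg) : B.IsSymm := by
  refine ⟨fun x y => ?_⟩
  have hsum := (Complex.le_def.1 (hB.nonneg (x + y))).2
  have hrot := (Complex.le_def.1 (hB.nonneg (x + Complex.I • y))).2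
  have hx := (Complex.le_def.1 (hB.nonneg x)).2
  have hy := (Complex.le_def.1 (hB.nonneg y)).2
  simp only [map_add, map_smulₛₗ, add_apply, smul_apply, smul_eq_mul, RingHom.id_apply,
    Complex.add_im, Complex.add_re, Complex.mul_im, Complex.mul_re, Complex.conj_re,
    Complex.conj_im, Complex.I_re, Complex.I_im, Complex.zero_im] at hsum hrot hx hy
  apply Complex.ext <;> simp only [Complex.conj_re, Complex.conj_im] <;> linarith

theorem IsNonneg.norm_sq_le (hB : B.IsNonneg) (x y : V) :
    ‖B x y‖ ^ 2 ≤ (B x x).re * (B y y).re := by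
  let core : PreInnerProductSpace.Core ℂ V :=
    { inner := fun x y => B x y
      conj_inner_symm := fun x y => hB.isSymm.eq y x
      re_inner_nonneg := fun x => (Complex.le_def.1 (hB.nonneg x)).1
      add_left := fun x y z => by simp
      smul_left := fun x y r => by simp }
  have h : ‖B x y‖ * ‖B y x‖ ≤ (B x x).re * (B y y).re :=
    InnerProductSpace.Core.inner_mul_inner_self_le (𝕜 := ℂ) x y
  rwa [← hB.isSymm.eq x y, RCLike.norm_conj, ← sq] at h

theorem IsNonneg.norm_apply_le_of_le_inner {E : Type*} [SeminormedAddCommGroup E]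
    [InnerProductSpace ℂ E] (hB : B.IsNonneg) (f : V →ₗ[ℂ] E)
    (hle : ∀ x, B x x ≤ ⟪f x, f x⟫) (x y : V) : ‖B x y‖ ≤ ‖f x‖ * ‖f y‖ := by
  have hre : ∀ x, (B x x).re ≤ ‖f x‖ ^ 2 := fun x => by
    simpa [← inner_self_eq_norm_sq (𝕜 := ℂ)] using (Complex.le_def.1 (hle x)).1
  have hsq : ‖B x y‖ ^ 2 ≤ (‖f x‖ * ‖f y‖) ^ 2 := by
    rw [mul_pow]
    exact (hB.norm_sq_le x y).trans (mul_le_mul (hre x) (hre y)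
      ((Complex.le_def.1 (hB.nonneg y)).1) (sq_nonneg _))
  exact (pow_le_pow_iff_left₀ (norm_nonneg _) (by positivity) two_ne_zero).1 hsq

end LinearMap

section DenseExtension

open scoped InnerProductSpace

variable {𝕜 E : Type*} [RCLike 𝕜] [NormedAddCommGroup E] [InnerProductSpace 𝕜 E]

theorem ContinuousLinearMap.ext_inner_of_dense_span {S : Set E}
    (hS : Dense (Submodule.span 𝕜 S : Set E)) {X Y : E →L[𝕜] E}
    (h : ∀ u ∈ S, ∀ w ∈ S, ⟪u, X w⟫_𝕜 = ⟪u, Y w⟫_𝕜) : X = Y := by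
  refine ContinuousLinearMap.ext_on hS fun w hw => ext_inner_left 𝕜 fun u => ?_
  have hw' : innerSLFlip 𝕜 (X w) = innerSLFlip 𝕜 (Y w) :=
    ContinuousLinearMap.ext_on hS fun u hu => h u hu w hw
  simpa using DFunLike.congr_fun hw' u

theorem exists_inner_map_eq_of_norm_le [CompleteSpace E] {V : Type*} [AddCommGroup V]
    [Module 𝕜 V] {f : V →ₗ[𝕜] E} (hf : DenseRange f) (B : V →ₗ⋆[𝕜] V →ₗ[𝕜] 𝕜) {C : ℝ}
    (hC : 0 ≤ C) (hB : ∀ x y, ‖B x y‖ ≤ C * ‖f x‖ * ‖f y‖) :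
    ∃ T : E →L[𝕜] E, ∀ x y, ⟪f x, T (f y)⟫_𝕜 = B x y := by
  let L : V →ₗ⋆[𝕜] E →L[𝕜] 𝕜 :=
    { toFun := fun x => (B x).extendOfNorm f
      map_add' := fun x x' => LinearMap.extendOfNorm_unique hf _ (hB (x + x')) _ <| by
        ext y
        simp [LinearMap.extendOfNorm_eq hf ⟨_, hB x⟩, LinearMap.extendOfNorm_eq hf ⟨_, hB x'⟩]
      map_smul' := fun c x => LinearMap.extendOfNorm_unique hf _ (hB (c • x)) _ <| by
        ext y; simp [LinearMap.extendOfNorm_eq hf ⟨_, hB x⟩] }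
  have hL : ∀ x, ‖L x‖ ≤ C * ‖f x‖ := fun x =>
    LinearMap.opNorm_extendOfNorm_le hf (by positivity) (hB x)
  refine ⟨ContinuousLinearMap.adjoint
    (InnerProductSpace.continuousLinearMapOfBilin (L.extendOfNorm f)), fun x y => ?_⟩
  rw [ContinuousLinearMap.adjoint_inner_right,
    InnerProductSpace.continuousLinearMapOfBilin_apply,
    LinearMap.extendOfNorm_eq hf ⟨C, hL⟩]
  exact LinearMap.extendOfNorm_eq hf ⟨_, hB x⟩ y

end DenseExtension

section CompletelyPositive

variable {A : Type*} [Ring A] [StarRing A] [Algebra ℂ A]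
  {H : Type*} [NormedAddCommGroup H] [InnerProductSpace ℂ H]

theorem IsCompletelyPositive.sum_nonneg {Ψ : A →ₗ[ℂ] H →L[ℂ] H} (hΨ : IsCompletelyPositive Ψ)
    {ι : Type*} [Fintype ι] (a : ι → A) (v : ι → H) :
    0 ≤ ∑ j, ∑ k, ⟪v j, Ψ (star (a j) * a k) (v k)⟫ := by
  simp only [← (Fintype.equivFin ι).symm.sum_comp]
  exact hΨ _ (a ∘ (Fintype.equivFin ι).symm) (v ∘ (Fintype.equivFin ι).symm)

def stinespringForm (Ψ : A →ₗ[ℂ] H →L[ℂ] H) : (A →₀ H) →ₗ⋆[ℂ] (A →₀ H) →ₗ[ℂ] ℂ :=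
  Finsupp.lsum ℂ fun a =>
    (Finsupp.lsum ℂ fun b => ((innerₛₗ ℂ).compl₂ (Ψ (star a * b)).toLinearMap).flip).flip

theorem stinespringForm_apply (Ψ : A →ₗ[ℂ] H →L[ℂ] H) (s t : A →₀ H) :
    stinespringForm Ψ s t = s.sum fun a v => t.sum fun b w => ⟪v, Ψ (star a * b) w⟫ := by
  simp [stinespringForm, Finsupp.lsum_apply, LinearMap.finsupp_sum_apply]

@[simp]
theorem stinespringForm_single (Ψ : A →ₗ[ℂ] H →L[ℂ] H) (a b : A) (v w : H) :
    stinespringForm Ψ (Finsupp.single a v) (Finsupp.single b w) = ⟪v, Ψ (star a * b) w⟫ := by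
  simp [stinespringForm]

theorem stinespringForm_sub (Φ Ψ : A →ₗ[ℂ] H →L[ℂ] H) :
    stinespringForm (Φ - Ψ) = stinespringForm Φ - stinespringForm Ψ :=
  Finsupp.lhom_ext fun a v => Finsupp.lhom_ext fun b w => by simp

theorem IsCompletelyPositive.isNonneg_stinespringForm {Ψ : A →ₗ[ℂ] H →L[ℂ] H}
    (hΨ : IsCompletelyPositive Ψ) : (stinespringForm Ψ).IsNonneg := by
  refine ⟨fun s => ?_⟩
  simp only [stinespringForm_apply, Finsupp.sum, ← Finset.sum_coe_sort s.support]
  exact hΨ.sum_nonneg (fun a : s.support => (a : A)) (fun a => s a)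

end CompletelyPositive

section StinespringDilation

open ContinuousLinearMap

variable {A : Type*} [Ring A] [StarRing A] [Algebra ℂ A]
  {H M : Type*} [NormedAddCommGroup H] [InnerProductSpace ℂ H]
  [NormedAddCommGroup M] [InnerProductSpace ℂ M] [CompleteSpace M]

theorem inner_map_apply_left (π : A →⋆ₐ[ℂ] (M →L[ℂ] M)) (a : A) (x y : M) :
    ⟪π a x, y⟫ = ⟪x, π (star a) y⟫ := by
  rw [map_star, star_eq_adjoint, adjoint_inner_right]

def stinespringMap (π : A →⋆ₐ[ℂ] (M →L[ℂ] M)) (J : H →L[ℂ] M) : (A →₀ H) →ₗ[ℂ] M :=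
  Finsupp.lsum ℂ fun a => (π a ∘L J).toLinearMap

@[simp]
theorem stinespringMap_single (π : A →⋆ₐ[ℂ] (M →L[ℂ] M)) (J : H →L[ℂ] M) (a : A) (v : H) :
    stinespringMap π J (Finsupp.single a v) = π a (J v) := by
  simp [stinespringMap]

theorem stinespringForm_eq_inner [CompleteSpace H] {Φ : A →ₗ[ℂ] H →L[ℂ] H}
    {π : A →⋆ₐ[ℂ] (M →L[ℂ] M)} {J : H →L[ℂ] M} (hΦ : ∀ a, Φ a = adjoint J ∘L π a ∘L J)
    (s t : A →₀ H) :
    stinespringForm Φ s t = ⟪stinespringMap π J s, stinespringMap π J t⟫ := by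
  suffices stinespringForm Φ =
      ((innerₛₗ ℂ).compl₂ (stinespringMap π J)).comp (stinespringMap π J) by
    rw [this]; rfl
  refine Finsupp.lhom_ext fun a v => Finsupp.lhom_ext fun b w => ?_
  simp [hΦ, adjoint_inner_right, map_mul, inner_map_apply_left]

def IsRadonNikodymDeriv (π : A →⋆ₐ[ℂ] (M →L[ℂ] M)) (J : H →L[ℂ] M)
    (Ψ : A →ₗ[ℂ] H →L[ℂ] H) (E : M →L[ℂ] M) : Prop :=
  ∀ (a b : A) (v w : H), ⟪π a (J v), E (π b (J w))⟫ = ⟪v, Ψ (star a * b) w⟫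

variable {π : A →⋆ₐ[ℂ] (M →L[ℂ] M)} {J : H →L[ℂ] M} {Ψ : A →ₗ[ℂ] H →L[ℂ] H} {E : M →L[ℂ] M}

theorem IsRadonNikodymDeriv.commute
    (hmin : Dense (Submodule.span ℂ {m : M | ∃ (a : A) (v : H), m = π a (J v)} : Set M))
    (hE : IsRadonNikodymDeriv π J Ψ E) (a : A) : Commute E (π a) := by
  refine ext_inner_of_dense_span hmin ?_
  rintro _ ⟨x, v, rfl⟩ _ ⟨b, w, rfl⟩
  calc ⟪π x (J v), (E * π a) (π b (J w))⟫
      = ⟪v, Ψ (star x * (a * b)) w⟫ := by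
        rw [mul_apply_eq_comp, ← mul_apply_eq_comp (π a), ← map_mul, hE]
    _ = ⟪v, Ψ (star (star a * x) * b) w⟫ := by rw [star_mul, star_star, mul_assoc]
    _ = ⟪π x (J v), (π a * E) (π b (J w))⟫ := by
      rw [← hE, map_mul, mul_apply_eq_comp, inner_map_apply_left, star_star, mul_apply_eq_comp]

theorem IsRadonNikodymDeriv.apply_eq [CompleteSpace H]
    (hmin : Dense (Submodule.span ℂ {m : M | ∃ (a : A) (v : H), m = π a (J v)} : Set M))
    (hE : IsRadonNikodymDeriv π J Ψ E) (a : A) :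
    Ψ a = adjoint J ∘L (π a ∘L E) ∘L J := by
  ext w : 1
  refine ext_inner_left ℂ fun v => ?_
  calc ⟪v, Ψ a w⟫ = ⟪π 1 (J v), E (π a (J w))⟫ := by rw [hE, star_one, one_mul]
    _ = _ := by
      rw [map_one, one_apply_eq_self, ← mul_apply_eq_comp, (hE.commute hmin a).eq]
      simp [adjoint_inner_right]

theorem IsRadonNikodymDeriv.of_commute [CompleteSpace H] (hc : ∀ a, Commute E (π a))
    (hf : ∀ a, Ψ a = adjoint J ∘L (π a ∘L E) ∘L J) : IsRadonNikodymDeriv π J Ψ E :=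
  fun a b v w => by
    rw [inner_map_apply_left, ← mul_apply_eq_comp E, (hc b).eq, mul_apply_eq_comp,
      ← mul_apply_eq_comp, ← map_mul, hf]
    simp [adjoint_inner_right]

theorem IsRadonNikodymDeriv.unique {E' : M →L[ℂ] M}
    (hmin : Dense (Submodule.span ℂ {m : M | ∃ (a : A) (v : H), m = π a (J v)} : Set M))
    (hE : IsRadonNikodymDeriv π J Ψ E) (hE' : IsRadonNikodymDeriv π J Ψ E') : E = E' :=
  ext_inner_of_dense_span hmin <| by
    rintro _ ⟨a, v, rfl⟩ _ ⟨b, w, rfl⟩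
    rw [hE, hE']

theorem exists_isRadonNikodymDeriv [CompleteSpace H] {Φ : A →ₗ[ℂ] H →L[ℂ] H}
    (hΨ : IsCompletelyPositive Ψ) (hle : IsCompletelyPositive (Φ - Ψ))
    (hdil : IsMinimalStinespring Φ π J) :
    ∃ E, IsRadonNikodymDeriv π J Ψ E := by
  have hdense : DenseRange (stinespringMap π J) := by
    rw [DenseRange, ← LinearMap.coe_range]
    refine hdil.minimal.mono (Submodule.span_le.2 ?_)
    rintro _ ⟨a, v, rfl⟩
    exact ⟨Finsupp.single a v, stinespringMap_single π J a v⟩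
  have hdom : ∀ s, stinespringForm Ψ s s ≤ ⟪stinespringMap π J s, stinespringMap π J s⟫ := by
    intro s
    have h := hle.isNonneg_stinespringForm.nonneg s
    rwa [stinespringForm_sub, LinearMap.sub_apply, LinearMap.sub_apply,
      stinespringForm_eq_inner hdil.dilation, sub_nonneg] at h
  obtain ⟨E, hE⟩ := exists_inner_map_eq_of_norm_le hdense (stinespringForm Ψ) zero_le_one
    (by simpa using hΨ.isNonneg_stinespringForm.norm_apply_le_of_le_inner _ hdom)
  exact ⟨E, fun a b v w => by simpa using hE (Finsupp.single a v) (Finsupp.single b w)⟩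

end StinespringDilation

theorem cp_radon_nikodym
    {A : Type*} [CStarAlgebra A]
    {H M : Type*} [NormedAddCommGroup H] [InnerProductSpace ℂ H] [CompleteSpace H]
    [NormedAddCommGroup M] [InnerProductSpace ℂ M] [CompleteSpace M]
    (Φ Ψ : A →ₗ[ℂ] H →L[ℂ] H)
    (hΨ : IsCompletelyPositive Ψ)
    (hle : IsCompletelyPositive (Φ - Ψ))
    (π : A →⋆ₐ[ℂ] (M →L[ℂ] M)) (J : H →L[ℂ] M)
    (hdil : IsMinimalStinespring Φ π J) :
    ∃! E : M →L[ℂ] M, (∀ a : A, Commute E (π a)) ∧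
      ∀ a : A, Ψ a = (ContinuousLinearMap.adjoint J) ∘L (π a ∘L E) ∘L J := by
  obtain ⟨E, hE⟩ := exists_isRadonNikodymDeriv hΨ hle hdil
  refine ⟨E, ⟨hE.commute hdil.minimal, hE.apply_eq hdil.minimal⟩, ?_⟩
  rintro E' ⟨hc, hf⟩
  exact (IsRadonNikodymDeriv.of_commute hc hf).unique hdil.minimal hE
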